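/- arXiv:2302.08937 — 7 statements merged into one kernel-verified Lean document; each statement's English description precedes it below -/
import Mathlib

section
/- If A has a differentiable boundary, x ∈ ∂A, and v ∈ E satisfies ⟨∇μ_A(x), v⟩ ≠ 0, then the affine line span(v) + {x} intersects the interior of A. -/
open scoped RealInnerProductSpace Pointwise

theorem line_meets_interior_of_nonzero_derivative
    {E : Type*} [NormedAddCommGroup E] [InnerProductSpace ℝ E] [FiniteDimensional ℝ E]
    (A : Set E) (hconv : Convex ℝ A) (hbdd : Bornology.IsBounded A)
    (h0 : (0 : E) ∈ interior A)
    (hC1 : ContDiffOn ℝ 1 (gauge A) {0}ᶜ)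
    (x : E) (hx : x ∈ frontier A) (v : E)
    (hv : ⟪gradient (gauge A) x, v⟫ ≠ 0) :
    ((((Submodule.span ℝ {v}) : Set E) + ({x} : Set E)) ∩ interior A).Nonempty := by
  have hA0 : A ∈ nhds (0 : E) := mem_interior_iff_mem_nhds.1 h0
  have hx1 : gauge A x = 1 := (gauge_eq_one_iff_mem_frontier hconv hA0).2 hx
  have hxne : x ≠ 0 := by
    intro h; rw [h, gauge_zero] at hx1; norm_num at hx1
  -- differentiability at x
  have hdiff : DifferentiableAt ℝ (gauge A) x := by
    have := (hC1.contDiffAt (isOpen_compl_singleton.mem_nhds hxne))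
    exact this.differentiableAt one_ne_zero
  have hgrad : HasGradientAt (gauge A) (gradient (gauge A) x) x :=
    hdiff.hasGradientAt
  have hfd : HasFDerivAt (gauge A) _ x := hgrad.hasFDerivAt
  set c : ℝ := ⟪gradient (gauge A) x, v⟫ with hc
  -- curve t ↦ x + t • v
  have hcurve : ∀ t : ℝ, HasDerivAt (fun t : ℝ => x + t • v) v t := by
    intro t
    simpa using ((hasDerivAt_id t).smul_const v).const_add x
  have hfd' : HasFDerivAt (gauge A) ((InnerProductSpace.toDual ℝ E) (gradient (gauge A) x))
      (x + (0:ℝ) • v) := by simpa using hfd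
  have hg : HasDerivAt (fun t : ℝ => gauge A (x + t • v)) c 0 := by
    have := hfd'.comp_hasDerivAt 0 (hcurve 0)
    have h3 : HasDerivAt (fun t : ℝ => gauge A (x + t • v)) _ 0 := this
    simpa [InnerProductSpace.toDual_symm_apply, hc, real_inner_comm] using h3
  -- find t with gauge A (x + t • v) < 1
  have hslope := hasDerivAt_iff_tendsto_slope.1 hg
  have hex : ∃ t : ℝ, gauge A (x + t • v) < 1 := by
    rcases hv.lt_or_gt with hneg | hpos
    · -- c < 0 : take t > 0
      have h1 : Filter.Tendsto (slope (fun t : ℝ => gauge A (x + t • v)) 0)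
          (nhdsWithin 0 (Set.Ioi 0)) (nhds c) :=
        hslope.mono_left (nhdsWithin_mono _ (fun t ht => Set.mem_compl_singleton_iff.2 (ne_of_gt ht)))
      have h2 : ∀ᶠ t in nhdsWithin (0:ℝ) (Set.Ioi 0),
          slope (fun t : ℝ => gauge A (x + t • v)) 0 t < 0 :=
        h1.eventually (eventually_lt_nhds hneg)
      rcases (h2.and self_mem_nhdsWithin).exists with ⟨t, hst, ht⟩
      refine ⟨t, ?_⟩
      have ht0 : (0:ℝ) < t := ht
      rw [slope_def_field] at hst
      simp only [zero_smul, add_zero, hx1, sub_zero] at hst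
      rcases div_neg_iff.1 hst with ⟨_, h⟩ | ⟨h, _⟩
      · linarith
      · linarith
    · -- c > 0 : take t < 0
      have h1 : Filter.Tendsto (slope (fun t : ℝ => gauge A (x + t • v)) 0)
          (nhdsWithin 0 (Set.Iio 0)) (nhds c) :=
        hslope.mono_left (nhdsWithin_mono _ (fun t ht => Set.mem_compl_singleton_iff.2 (ne_of_lt ht)))
      have h2 : ∀ᶠ t in nhdsWithin (0:ℝ) (Set.Iio 0),
          (0:ℝ) < slope (fun t : ℝ => gauge A (x + t • v)) 0 t :=
        h1.eventually (eventually_gt_nhds hpos)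
      rcases (h2.and self_mem_nhdsWithin).exists with ⟨t, hst, ht⟩
      refine ⟨t, ?_⟩
      have ht0 : t < 0 := ht
      rw [slope_def_field] at hst
      simp only [zero_smul, add_zero, hx1, sub_zero] at hst
      rcases div_pos_iff.1 hst with ⟨_, h⟩ | ⟨h, _⟩
      · linarith
      · linarith
  rcases hex with ⟨t, ht⟩
  refine ⟨t • v + x,
    Set.add_mem_add (Submodule.smul_mem _ t (Submodule.mem_span_singleton_self v)) rfl, ?_⟩
  rw [add_comm]
  exact (gauge_lt_one_iff_mem_interior hconv hA0).1 ht
end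

section
/- If A has a differentiable boundary and x ∈ ∂A, then ker⟨∇μ_A(x), ·⟩ = { v ∈ E : (span(v) + {x}) ∩ int(A) = ∅ }, i.e. the supporting hyperplane at x consists exactly of the directions from x along which the line through x never meets the interior of A. -/
open scoped RealInnerProductSpace Pointwise

open Set

theorem topological_characterization_of_supporting_hyperplane
    {E : Type*} [NormedAddCommGroup E] [InnerProductSpace ℝ E] [FiniteDimensional ℝ E]
    (A : Set E) (hconv : Convex ℝ A) (hbdd : Bornology.IsBounded A)
    (h0 : (0 : E) ∈ interior A)
    (hC1 : ContDiffOn ℝ 1 (gauge A) {0}ᶜ)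
    (x : E) (hx : x ∈ frontier A) :
    {v : E | ⟪gradient (gauge A) x, v⟫ = 0} =
      {v : E | (((Submodule.span ℝ {v} : Set E) + ({x} : Set E)) ∩ interior A) = ∅} := by
  have hA0 : A ∈ nhds 0 := mem_interior_iff_mem_nhds.1 h0
  have habs : Absorbent ℝ A := absorbent_nhds_zero hA0
  have hg1 : gauge A x = 1 := (gauge_eq_one_iff_mem_frontier hconv hA0).2 hx
  have hx0 : x ≠ 0 := by
    intro h; rw [h, gauge_zero] at hg1; norm_num at hg1
  have hdiff : DifferentiableAt ℝ (gauge A) x :=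
    (hC1.contDiffAt (isOpen_compl_singleton.mem_nhds hx0)).differentiableAt one_ne_zero
  have hgrad : HasGradientAt (gauge A) (gradient (gauge A) x) x := hdiff.hasGradientAt
  have hF : HasFDerivAt (gauge A)
      (InnerProductSpace.toDual ℝ E (gradient (gauge A) x)) x :=
    hasGradientAt_iff_hasFDerivAt.1 hgrad
  -- gauge is convex
  have hcvx : ConvexOn ℝ Set.univ (gauge A) := by
    refine ⟨convex_univ, fun y _ z _ a b ha hb hab => ?_⟩
    calc gauge A (a • y + b • z) ≤ gauge A (a • y) + gauge A (b • z) :=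
          gauge_add_le hconv habs _ _
      _ = a * gauge A y + b * gauge A z := by
          rw [gauge_smul_of_nonneg ha, gauge_smul_of_nonneg hb, smul_eq_mul, smul_eq_mul]
  ext v
  simp only [Set.mem_setOf_eq]
  set φ : ℝ → ℝ := fun t => gauge A (x + t • v) with hφdef
  have hφ0 : φ 0 = 1 := by simp [hφdef, hg1]
  -- derivative of φ at 0
  have hc : HasDerivAt (fun t : ℝ => x + t • v) v 0 := by
    simpa using (((hasDerivAt_id (0 : ℝ)).smul_const v).const_add x)
  have hφd : HasDerivAt φ ⟪gradient (gauge A) x, v⟫ 0 := by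
    have hF' : HasFDerivAt (gauge A)
        (InnerProductSpace.toDual ℝ E (gradient (gauge A) x)) (x + (0:ℝ) • v) := by
      simpa using hF
    have := hF'.comp_hasDerivAt 0 hc
    rw [InnerProductSpace.toDual_apply_apply] at this
    exact this
  -- convexity of φ
  have hφc : ConvexOn ℝ Set.univ φ := by
    have h1 := hcvx.comp_affineMap (AffineMap.lineMap x (x + v))
    have h2 : φ = gauge A ∘ (AffineMap.lineMap x (x + v) : ℝ →ᵃ[ℝ] E) := by
      funext t
      simp [hφdef, AffineMap.lineMap_apply, add_sub_cancel_left, add_comm]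
    rw [h2]
    simpa using h1
  -- rewrite the RHS set
  have hset : ((Submodule.span ℝ {v} : Set E) + ({x} : Set E))
      = Set.range (fun t : ℝ => x + t • v) := by
    ext y
    simp only [Set.mem_add, Set.mem_singleton_iff, SetLike.mem_coe,
      Submodule.mem_span_singleton, Set.mem_range]
    constructor
    · rintro ⟨a, ⟨t, rfl⟩, b, rfl, rfl⟩; exact ⟨t, add_comm _ _⟩
    · rintro ⟨t, rfl⟩; exact ⟨t • v, ⟨t, rfl⟩, x, rfl, add_comm _ _⟩
  have hiff : (((Submodule.span ℝ {v} : Set E) + ({x} : Set E)) ∩ interior A = ∅)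
      ↔ ∀ t : ℝ, 1 ≤ φ t := by
    rw [hset, Set.eq_empty_iff_forall_notMem]
    constructor
    · intro h t
      have ht := h (x + t • v)
      have : x + t • v ∉ interior A := fun hmem => ht ⟨⟨t, rfl⟩, hmem⟩
      rw [← gauge_lt_one_iff_mem_interior hconv hA0] at this
      exact not_lt.1 this
    · rintro h y ⟨⟨t, rfl⟩, hmem⟩
      rw [← gauge_lt_one_iff_mem_interior hconv hA0] at hmem
      exact absurd hmem (not_lt.2 (h t))
  rw [hiff]
  constructor
  · intro h t
    rcases lt_trichotomy t 0 with ht | ht | ht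
    · have hs := hφc.slope_le_of_hasDerivAt (mem_univ t) (mem_univ 0) ht hφd
      rw [h, slope_def_field, hφ0, zero_sub] at hs
      by_contra hlt
      push_neg at hlt
      have : 0 < (1 - φ t) / (-t) := div_pos (by linarith) (by linarith)
      linarith
    · rw [ht, hφ0]
    · have hs := hφc.le_slope_of_hasDerivAt (mem_univ 0) (mem_univ t) ht hφd
      rw [h, slope_def_field, hφ0, sub_zero] at hs
      by_contra hlt
      push_neg at hlt
      have : (φ t - 1) / t < 0 := div_neg_of_neg_of_pos (by linarith) ht
      linarith
  · intro h
    have hmin : IsLocalMin φ 0 :=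
      Filter.Eventually.of_forall fun t => by rw [hφ0]; exact h t
    have hz := hmin.deriv_eq_zero
    rw [hφd.deriv] at hz
    exact hz
end

section
/- If A has a differentiable boundary, then the orthogonal projection p_V onto a nonzero linear subspace V satisfies p_V(int_E(A)) = int_V(p_V(A)), where int_V denotes the interior relative to V. -/
/-!
The projection is a surjective linear map between finite-dimensional spaces, hence open, which
gives `⊆`. Conversely, let `y` be interior to `p(A)` and `x₀ ∈ int A`. Pushing `y` slightly beyond
itself, away from `p(x₀)`, stays in `p(A)`: `y + t (y - p x₀) = p x₁` with `x₁ ∈ A`, `t > 0`. Then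
`y` is the image of the convex combination `(t x₀ + x₁) / (1 + t)`, which lies in `int A` because
its weight on the interior point `x₀` is positive.
-/

open Set Filter Topology

theorem exists_pos_add_smul_sub_mem_of_mem_interior {F : Type*} [AddCommGroup F] [Module ℝ F]
    [TopologicalSpace F] [ContinuousAdd F] [ContinuousSMul ℝ F] {S : Set F} {y : F}
    (hy : y ∈ interior S) (z : F) : ∃ t : ℝ, 0 < t ∧ y + t • (y - z) ∈ S := by
  have hcont : Continuous fun t : ℝ => y + t • (y - z) := by fun_prop
  have hnhds : ∀ᶠ t in 𝓝 (0 : ℝ), y + t • (y - z) ∈ S :=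
    hcont.continuousAt.preimage_mem_nhds (by simpa using mem_interior_iff_mem_nhds.mp hy)
  exact ((hnhds.filter_mono (nhdsWithin_le_nhds (s := Ioi 0))).and self_mem_nhdsWithin).exists.imp
    fun _ h => ⟨h.2, h.1⟩

theorem Convex.interior_image_subset_image_interior {E F : Type*}
    [AddCommGroup E] [Module ℝ E] [TopologicalSpace E] [IsTopologicalAddGroup E]
    [ContinuousConstSMul ℝ E]
    [AddCommGroup F] [Module ℝ F] [TopologicalSpace F] [ContinuousAdd F] [ContinuousSMul ℝ F]
    (f : E →ₗ[ℝ] F) {A : Set E} (hA : Convex ℝ A) {x₀ : E} (hx₀ : x₀ ∈ interior A) :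
    interior (f '' A) ⊆ f '' interior A := by
  intro y hy
  obtain ⟨t, ht, x₁, hx₁, hfx₁⟩ := exists_pos_add_smul_sub_mem_of_mem_interior hy (f x₀)
  have hcombo : (t / (1 + t)) • x₀ + (1 / (1 + t)) • x₁ ∈ interior A :=
    hA.combo_interior_self_mem_interior hx₀ hx₁ (by positivity) (by positivity)
      (by field_simp; ring)
  refine ⟨_, hcombo, ?_⟩
  rw [map_add, map_smul, map_smul, hfx₁]
  match_scalars <;> field_simp
  ring

theorem projection_of_interior_eq_interior_of_projection_general
    {E : Type*} [NormedAddCommGroup E] [InnerProductSpace ℝ E] [FiniteDimensional ℝ E]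
    (A : Set E) (hconv : Convex ℝ A)
    (h0 : (0 : E) ∈ interior A)
    (V : Submodule ℝ E) :
    (V.orthogonalProjection) '' interior A = interior ((V.orthogonalProjection) '' A) := by
  have hsurj : Function.Surjective V.orthogonalProjectionOnto := fun v =>
    ⟨v, V.orthogonalProjectionOnto_mem_subspace_eq_self v⟩
  exact ((V.orthogonalProjectionOnto.isOpenMap hsurj).image_interior_subset A).antisymm
    (hconv.interior_image_subset_image_interior V.orthogonalProjectionOnto.toLinearMap h0)

theorem projection_of_interior_eq_interior_of_projection
    {E : Type*} [NormedAddCommGroup E] [InnerProductSpace ℝ E] [FiniteDimensional ℝ E]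
    (A : Set E) (hconv : Convex ℝ A) (hbdd : Bornology.IsBounded A)
    (h0 : (0 : E) ∈ interior A)
    (hC1 : ContDiffOn ℝ 1 (gauge A) {0}ᶜ)
    (V : Submodule ℝ E) (hV : V ≠ ⊥) :
    (V.orthogonalProjection) '' interior A = interior ((V.orthogonalProjection) '' A) :=
  projection_of_interior_eq_interior_of_projection_general A hconv h0 V
end

section
/- For a convex bounded set A with 0 ∈ int(A) and a nonzero linear subspace V, p_V(cl(A)) = ⋃_{t ∈ [0,1]} ∂_V( p_V( cl(t • A) ) ), i.e. the projection of the closure of A is the union over t ∈ [0,1] of the boundaries (relative to V) of the projections of the scaled sets t·A. -/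
/-!
Write `K` for the compact convex set `p_V (cl A)`; it is a neighbourhood of `0` in `V` because
`p_V` is an open map, and `p_V (cl (t • A)) = t • K`. For a convex neighbourhood `K` of `0`
the frontier of `t • K` (`t > 0`) is the level set `{gauge K = t}`. Since `K` is bounded,
the gauge vanishes only at `0` (which lies in the frontier of `0 • K = {0}`), and since `K`
is closed, `K = {gauge K ≤ 1}`; so the frontiers of `t • K`, `t ∈ [0, 1]`, exhaust `K`.
-/

open scoped Pointwise Topology
open Set

section Gauge

variable {F : Type*} [NormedAddCommGroup F] [NormedSpace ℝ F] {K : Set F}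

theorem mem_frontier_gauge_smul (hc : Convex ℝ K) (hK : K ∈ 𝓝 0) {x : F}
    (hx : 0 < gauge K x) : x ∈ frontier (gauge K x • K) := by
  rw [← gauge_eq_one_iff_mem_frontier (hc.smul _) ((set_smul_mem_nhds_zero_iff hx.ne').2 hK),
    gauge_smul_left_of_nonneg hx.le, Pi.smul_apply, smul_eq_mul, inv_mul_cancel₀ hx.ne']

theorem zero_mem_frontier_zero_smul [Nontrivial F] (hK : K.Nonempty) :
    (0 : F) ∈ frontier ((0 : ℝ) • K) := by
  rw [zero_smul_set hK, ← singleton_zero, frontier, closure_singleton, interior_singleton,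
    sdiff_empty]
  exact mem_singleton 0

theorem Convex.biUnion_frontier_smul_Icc [Nontrivial F] (hc : Convex ℝ K) (hcl : IsClosed K)
    (hb : Bornology.IsBounded K) (hK : K ∈ 𝓝 0) :
    ⋃ t ∈ Icc (0 : ℝ) 1, frontier (t • K) = K := by
  have h0K : (0 : F) ∈ K := mem_of_mem_nhds hK
  refine Subset.antisymm (iUnion₂_subset fun t ht => ?_) fun x hx => mem_iUnion₂.2 ?_
  · have hsub : t • K ⊆ K := by
      rintro _ ⟨y, hy, rfl⟩
      exact hc.smul_mem_of_zero_mem h0K hy ht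
    exact frontier_subset_closure.trans (closure_minimal hsub hcl)
  rcases eq_or_ne x 0 with rfl | hx0
  · exact ⟨0, left_mem_Icc.2 zero_le_one, zero_mem_frontier_zero_smul ⟨0, h0K⟩⟩
  have hpos : 0 < gauge K x := (gauge_pos (absorbent_nhds_zero hK)
    (NormedSpace.isVonNBounded_of_isBounded ℝ hb)).2 hx0
  exact ⟨gauge K x, ⟨hpos.le, gauge_le_one_of_mem hx⟩, mem_frontier_gauge_smul hc hK hpos⟩

end Gauge

theorem projection_closure_eq_union_of_scaled_frontiers
    {E : Type*} [NormedAddCommGroup E] [InnerProductSpace ℝ E] [FiniteDimensional ℝ E]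
    (A : Set E) (hconv : Convex ℝ A) (hbdd : Bornology.IsBounded A)
    (h0 : (0 : E) ∈ interior A)
    (V : Submodule ℝ E) (hV : V ≠ ⊥) :
    (Submodule.orthogonalProjection V) '' closure A =
      ⋃ t ∈ Set.Icc (0 : ℝ) 1,
        frontier ((Submodule.orthogonalProjection V) '' closure (t • A)) := by
  have : Nontrivial V := Submodule.nontrivial_iff_ne_bot.2 hV
  set P : E →L[ℝ] V := V.orthogonalProjectionOnto
  have hP : IsOpenMap P := P.isOpenMap fun v =>
    ⟨v, V.orthogonalProjectionOnto_mem_subspace_eq_self v⟩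
  have hK : P '' closure A ∈ 𝓝 0 := by
    refine mem_interior_iff_mem_nhds.1 (hP.image_interior_subset _ ?_)
    exact image_mono (interior_mono subset_closure) ⟨0, h0, map_zero P⟩
  have hcomp : IsCompact (P '' closure A) := hbdd.isCompact_closure.image P.continuous
  simp_rw [closure_smul₀, image_smul_set]
  exact ((hconv.closure.linear_image P.toLinearMap).biUnion_frontier_smul_Icc hcomp.isClosed
    hcomp.isBounded hK).symm
end

section
/- Let A be compact, convex, with differentiable boundary and 0 ∈ int(A), and let y ∈ ∂_V(p_V(A)). If x ∈ ∂A satisfies p_V(x) = y, then for every v ∈ V^⊥ the line span(v) + {x} does not meet int(A). -/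
open scoped Pointwise

open Set

theorem IsOpenMap.disjoint_fiber_interior_of_mem_frontier_image {X Y : Type*}
    [TopologicalSpace X] [TopologicalSpace Y] {f : X → Y} (hf : IsOpenMap f) {A : Set X}
    {y : Y} (hy : y ∈ frontier (f '' A)) : Disjoint (f ⁻¹' {y}) (interior A) :=
  disjoint_left.mpr fun _ hzy hzA => hy.2 (hf.image_interior_subset A ⟨_, hzA, hzy⟩)

theorem ContinuousLinearMap.isOpenMap_of_rightInverse {R M N : Type*} [Ring R]
    [TopologicalSpace M] [AddCommGroup M] [IsTopologicalAddGroup M] [Module R M]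
    [TopologicalSpace N] [AddCommGroup N] [IsTopologicalAddGroup N] [Module R N]
    (f : M →L[R] N) {g : N →L[R] M} (hfg : Function.RightInverse g f) : IsOpenMap f :=
  IsOpenMap.of_sections fun x =>
    ⟨fun w => x + g (w - f x), by fun_prop, by simp, fun w => by simp [hfg _]⟩

theorem LinearMap.add_span_singleton_subset_preimage {R M N : Type*} [Ring R]
    [AddCommGroup M] [Module R M] [AddCommGroup N] [Module R N] (f : M →ₗ[R] N)
    {v : M} (hv : v ∈ LinearMap.ker f) (x : M) :
    (Submodule.span R {v} : Set M) + {x} ⊆ f ⁻¹' {f x} := by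
  rintro _ ⟨a, ha, _, rfl, rfl⟩
  obtain ⟨c, rfl⟩ := Submodule.mem_span_singleton.mp ha
  simp_all

namespace Submodule

variable {E : Type*} [NormedAddCommGroup E] [InnerProductSpace ℝ E]
  (K : Submodule ℝ E) [K.HasOrthogonalProjection]

theorem isOpenMap_orthogonalProjectionOnto : IsOpenMap K.orthogonalProjectionOnto :=
  K.orthogonalProjectionOnto.isOpenMap_of_rightInverse (g := K.subtypeL)
    K.orthogonalProjectionOnto_mem_subspace_eq_self

end Submodule

theorem fiber_point_lines_miss_interior_general
    {E : Type*} [NormedAddCommGroup E] [InnerProductSpace ℝ E] [FiniteDimensional ℝ E]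
    (A : Set E)
    (V : Submodule ℝ E)
    (y : V) (hy : y ∈ frontier ((V.orthogonalProjectionOnto) '' A))
    (x : E) (hxy : V.orthogonalProjectionOnto x = y) :
    ∀ v ∈ Vᗮ, (((Submodule.span ℝ {v} : Set E) + ({x} : Set E)) ∩ interior A) = ∅ := by
  intro v hv
  have hline := V.orthogonalProjectionOnto.toLinearMap.add_span_singleton_subset_preimage
    (by simpa using hv) x
  rw [ContinuousLinearMap.coe_coe, hxy] at hline
  have hfiber :=
    V.isOpenMap_orthogonalProjectionOnto.disjoint_fiber_interior_of_mem_frontier_image hy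
  exact disjoint_iff_inter_eq_empty.mp (hfiber.mono_left hline)

theorem fiber_point_lines_miss_interior
    {E : Type*} [NormedAddCommGroup E] [InnerProductSpace ℝ E] [FiniteDimensional ℝ E]
    (A : Set E) (hcpt : IsCompact A) (hconv : Convex ℝ A)
    (h0 : (0 : E) ∈ interior A)
    (hC1 : ContDiffOn ℝ 1 (gauge A) {0}ᶜ)
    (V : Submodule ℝ E) (hV : V ≠ ⊥)
    (y : V) (hy : y ∈ frontier ((V.orthogonalProjectionOnto) '' A))
    (x : E) (hx : x ∈ frontier A) (hxy : V.orthogonalProjectionOnto x = y) :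
    ∀ v ∈ Vᗮ, (((Submodule.span ℝ {v} : Set E) + ({x} : Set E)) ∩ interior A) = ∅ :=
  fiber_point_lines_miss_interior_general A V y hy x hxy
end

section
/- Let A be compact, convex, with differentiable boundary and 0 ∈ int(A). If x ∈ ∂A satisfies V^⊥ ⊆ ker⟨∇μ_A(x), ·⟩, then p_V(x) ∈ ∂_V(p_V(A)). -/
open scoped RealInnerProductSpace Topology

open Set

/-! Since `gauge A` is convex and positively homogeneous, its gradient `g` at `x` satisfies
`⟪g, x⟫ = gauge A x = 1` and `⟪g, ·⟫ ≤ gauge A`, so `A` lies in the half-space `⟪g, ·⟫ ≤ 1`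
supporting it at `x`. The kernel condition puts `g` in `V`, where `⟪g, p_V y⟫ = ⟪g, y⟫`; hence
`p_V x` maximises the nonzero functional `⟪g, ·⟫` over `p_V(A)` and cannot be an interior point. -/

theorem convexOn_gauge {E : Type*} [AddCommGroup E] [Module ℝ E] {s : Set E}
    (hs : Convex ℝ s) (habs : Absorbent ℝ s) : ConvexOn ℝ univ (gauge s) :=
  ⟨convex_univ, fun u _ v _ a b ha hb _ => by
    simpa only [gauge_smul_of_nonneg ha, gauge_smul_of_nonneg hb, smul_eq_mul] using
      gauge_add_le hs habs (a • u) (b • v)⟩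

section InnerProductSpace

variable {E : Type*} [NormedAddCommGroup E] [InnerProductSpace ℝ E] [CompleteSpace E]

theorem ConvexOn.inner_gradient_sub_le {s : Set E} {f : E → ℝ} (hf : ConvexOn ℝ s f)
    {x y g : E} (hx : x ∈ s) (hy : y ∈ s) (hg : HasGradientAt f g x) :
    ⟪g, y - x⟫ ≤ f y - f x := by
  set L : ℝ →ᵃ[ℝ] E := AffineMap.lineMap x y
  have hline : ConvexOn ℝ (L ⁻¹' s) (f ∘ L) := hf.comp_affineMap L
  have hderiv : HasDerivAt (f ∘ L) ⟪g, y - x⟫ 0 := by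
    have hf' : HasFDerivAt f (InnerProductSpace.toDual ℝ E g) (L 0) := by
      simpa [L] using hg.hasFDerivAt
    exact hf'.comp_hasDerivAt 0 AffineMap.hasDerivAt_lineMap
  simpa [L, slope_def_field] using
    hline.le_slope_of_hasDerivAt (by simpa [L] using hx) (by simpa [L] using hy) zero_lt_one hderiv

variable {s : Set E} {x g : E}

theorem HasGradientAt.inner_eq_gauge (hs : Convex ℝ s) (habs : Absorbent ℝ s)
    (hg : HasGradientAt (gauge s) g x) : ⟪g, x⟫ = gauge s x := by
  have hsub := fun y ↦
    (convexOn_gauge hs habs).inner_gradient_sub_le (mem_univ x) (mem_univ y) hg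
  have hzero := hsub 0
  have htwo := hsub ((2 : ℝ) • x)
  rw [gauge_zero, zero_sub, inner_neg_right] at hzero
  rw [two_smul, add_sub_cancel_right, ← two_smul ℝ x,
    gauge_smul_of_nonneg zero_le_two, smul_eq_mul] at htwo
  linarith

theorem HasGradientAt.inner_le_gauge (hs : Convex ℝ s) (habs : Absorbent ℝ s)
    (hg : HasGradientAt (gauge s) g x) (y : E) : ⟪g, y⟫ ≤ gauge s y := by
  have := (convexOn_gauge hs habs).inner_gradient_sub_le (mem_univ x) (mem_univ y) hg
  rw [inner_sub_right, hg.inner_eq_gauge hs habs] at this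
  linarith

end InnerProductSpace

theorem notMem_interior_of_isMaxOn_inner {F : Type*} [NormedAddCommGroup F]
    [InnerProductSpace ℝ F] {S : Set F} {g z : F} (hg : g ≠ 0) (hmax : IsMaxOn (⟪g, ·⟫) S z) :
    z ∉ interior S := by
  intro hz
  have hzero : innerSL ℝ g = 0 :=
    (hmax.isLocalMax (mem_interior_iff_mem_nhds.mp hz)).hasFDerivAt_eq_zero
      (innerSL ℝ g).hasFDerivAt
  exact hg (by simpa using congrArg (· g) hzero)

theorem projection_mem_frontier_of_orthogonal_supporting_general
    {E : Type*} [NormedAddCommGroup E] [InnerProductSpace ℝ E] [FiniteDimensional ℝ E]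
    (A : Set E) (hconv : Convex ℝ A)
    (h0 : (0 : E) ∈ interior A)
    (hC1 : ContDiffOn ℝ 1 (gauge A) {0}ᶜ)
    (V : Submodule ℝ E)
    (x : E) (hx : x ∈ frontier A)
    (hker : ∀ v ∈ Vᗮ, ⟪gradient (gauge A) x, v⟫ = 0) :
    V.orthogonalProjectionOnto x ∈ frontier ((V.orthogonalProjectionOnto) '' A) := by
  set g := gradient (gauge A) x
  have hA : A ∈ 𝓝 0 := mem_interior_iff_mem_nhds.mp h0
  have habs : Absorbent ℝ A := absorbent_nhds_zero hA
  have hgauge : gauge A x = 1 := (gauge_eq_one_iff_mem_frontier hconv hA).mpr hx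
  have hx0 : x ≠ 0 := by rintro rfl; simp at hgauge
  have hgrad : HasGradientAt (gauge A) g x :=
    ((hC1.contDiffAt (isOpen_compl_singleton.mem_nhds hx0)).differentiableAt
      one_ne_zero).hasGradientAt
  have hgx : ⟪g, x⟫ = 1 := (hgrad.inner_eq_gauge hconv habs).trans hgauge
  have hgV : g ∈ V := V.orthogonal_orthogonal ▸ (Vᗮ.mem_orthogonal' g).mpr hker
  refine ⟨image_closure_subset_closure_image V.orthogonalProjectionOnto.continuous
    ⟨x, hx.1, rfl⟩, notMem_interior_of_isMaxOn_inner (g := ⟨g, hgV⟩) ?_ ?_⟩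
  · intro hg0
    rw [show g = 0 from congrArg Subtype.val hg0, inner_zero_left] at hgx
    exact zero_ne_one hgx
  · rintro _ ⟨y, hy, rfl⟩
    simp only [mem_ofPred_eq, Submodule.inner_orthogonalProjectionOnto_eq_of_mem_left, hgx]
    exact (hgrad.inner_le_gauge hconv habs y).trans (gauge_le_one_of_mem hy)

theorem projection_mem_frontier_of_orthogonal_supporting
    {E : Type*} [NormedAddCommGroup E] [InnerProductSpace ℝ E] [FiniteDimensional ℝ E]
    (A : Set E) (hcpt : IsCompact A) (hconv : Convex ℝ A)
    (h0 : (0 : E) ∈ interior A)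
    (hC1 : ContDiffOn ℝ 1 (gauge A) {0}ᶜ)
    (V : Submodule ℝ E) (hV : V ≠ ⊥)
    (x : E) (hx : x ∈ frontier A)
    (hker : ∀ v ∈ Vᗮ, ⟪gradient (gauge A) x, v⟫ = 0) :
    V.orthogonalProjectionOnto x ∈ frontier ((V.orthogonalProjectionOnto) '' A) :=
  projection_mem_frontier_of_orthogonal_supporting_general A hconv h0 hC1 V x hx hker
end

section
/- Let A be compact, convex, with differentiable boundary and 0 ∈ int(A), and V ≠ {0} a linear subspace. Define η_A(x_V, x_{V⊥}) = μ_A(x_V + x_{V⊥}) for x_V ∈ V, x_{V⊥} ∈ V^⊥. Then p_V(A) = { x_V ∈ V : ∃ x_{V⊥} ∈ V^⊥, η_A(x_V, x_{V⊥}) ≤ 1 and (x_V + x_{V⊥} ≠ 0 → the partial derivative of η_A with respect to x_{V⊥} vanishes at (x_V, x_{V⊥})) }. -/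
/-!
A point of `p_V(A)` is `p_V a` with `a ∈ A`. Minimising `μ_A` over the fibre `p_V a + V⊥` gives a
point of `A` over `p_V a` where the derivative of `μ_A` along `V⊥` vanishes; the minimum is
attained on the compact slice of `A`, because `μ_A > 1` off `A`. Conversely `μ_A(x_V + x_⊥) ≤ 1`
already puts `x_V + x_⊥` in `A`, and it projects to `x_V`.
-/

open scoped RealInnerProductSpace

section

variable {E : Type*} [NormedAddCommGroup E] [InnerProductSpace ℝ E]

theorem fderiv_apply_eq_zero_of_forall_le_add {f : E → ℝ} {x : E} (hf : DifferentiableAt ℝ f x)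
    {W : Submodule ℝ E} (hmin : ∀ w ∈ W, f x ≤ f (x + w)) {v : E} (hv : v ∈ W) :
    fderiv ℝ f x v = 0 := by
  have hline : HasDerivAt (fun s : ℝ => f (x + s • v)) (fderiv ℝ f x v) 0 := by
    have hcurve : HasDerivAt (fun s : ℝ => x + s • v) v 0 := by
      simpa using ((hasDerivAt_id (0 : ℝ)).smul_const v).const_add x
    exact hf.hasFDerivAt.comp_hasDerivAt_of_eq 0 hcurve (by simp)
  have hlocal : IsLocalMin (fun s : ℝ => f (x + s • v)) 0 :=
    Filter.Eventually.of_forall fun s => by simpa using hmin (s • v) (W.smul_mem s hv)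
  exact hlocal.hasDerivAt_eq_zero hline

variable {A : Set E}

theorem gauge_le_one_iff_mem_of_isClosed (hclosed : IsClosed A) (hconv : Convex ℝ A)
    (hA : A ∈ nhds (0 : E)) {x : E} : gauge A x ≤ 1 ↔ x ∈ A := by
  rw [gauge_le_one_iff_mem_closure hconv hA, hclosed.closure_eq]

theorem exists_mem_forall_gauge_add_le (hcpt : IsCompact A) (hconv : Convex ℝ A)
    (hA : A ∈ nhds (0 : E)) {W : Submodule ℝ E} (hW : IsClosed (W : Set E)) {y t : E}
    (ht : t ∈ W) (hyt : y + t ∈ A) :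
    ∃ t₀ ∈ W, y + t₀ ∈ A ∧ ∀ t ∈ W, gauge A (y + t₀) ≤ gauge A (y + t) := by
  have hslice : IsCompact ((y + ·) ⁻¹' A ∩ W) :=
    ((Homeomorph.addLeft y).isCompact_preimage.2 hcpt).inter_right hW
  obtain ⟨t₀, ⟨hyt₀, ht₀⟩, hmin⟩ := hslice.exists_isMinOn ⟨t, hyt, ht⟩
    ((continuous_gauge hconv hA).comp (continuous_const_add y)).continuousOn
  refine ⟨t₀, ht₀, hyt₀, fun t ht => ?_⟩
  by_cases hytA : y + t ∈ A
  · exact hmin ⟨hytA, ht⟩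
  · calc gauge A (y + t₀) ≤ 1 := gauge_le_one_of_mem hyt₀
      _ ≤ gauge A (y + t) :=
        (not_le.1 fun h => hytA ((gauge_le_one_iff_mem_of_isClosed hcpt.isClosed hconv hA).1 h)).le

end

theorem projection_characterization_general
    {E : Type*} [NormedAddCommGroup E] [InnerProductSpace ℝ E] [FiniteDimensional ℝ E]
    (A : Set E) (hcpt : IsCompact A) (hconv : Convex ℝ A)
    (h0 : (0 : E) ∈ interior A)
    (hC1 : ContDiffOn ℝ 1 (gauge A) {0}ᶜ)
    (V : Submodule ℝ E) :
    (V.orthogonalProjection) '' A =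
      {xV : V | ∃ xp ∈ Vᗮ, gauge A ((xV : E) + xp) ≤ 1 ∧
        ((xV : E) + xp ≠ 0 →
          ∀ v ∈ Vᗮ, ⟪gradient (gauge A) ((xV : E) + xp), v⟫ = 0)} := by
  have hA : A ∈ nhds (0 : E) := mem_interior_iff_mem_nhds.1 h0
  ext xV
  constructor
  · rintro ⟨a, ha, rfl⟩
    obtain ⟨t₀, ht₀, hA₀, hmin⟩ := exists_mem_forall_gauge_add_le hcpt hconv hA
      (Submodule.closed_of_finiteDimensional Vᗮ) (V.sub_starProjection_mem_orthogonal a)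
      (y := V.starProjection a) (by rwa [add_sub_cancel])
    refine ⟨t₀, ht₀, gauge_le_one_of_mem hA₀, fun hne v hv => ?_⟩
    have hdiff : DifferentiableAt ℝ (gauge A) ((V.orthogonalProjectionOnto a : E) + t₀) :=
      (hC1.differentiableOn one_ne_zero).differentiableAt (isOpen_compl_singleton.mem_nhds hne)
    rw [inner_gradient_left]
    exact fderiv_apply_eq_zero_of_forall_le_add hdiff
      (fun w hw => by simpa [add_assoc] using hmin (t₀ + w) (Vᗮ.add_mem ht₀ hw)) hv
  · rintro ⟨xp, hxp, hle, -⟩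
    refine ⟨(xV : E) + xp, (gauge_le_one_iff_mem_of_isClosed hcpt.isClosed hconv hA).1 hle, ?_⟩
    rw [map_add, Submodule.orthogonalProjectionOnto_mem_subspace_eq_self,
      Submodule.orthogonalProjectionOnto_apply_of_mem_orthogonal hxp, add_zero]

theorem projection_characterization
    {E : Type*} [NormedAddCommGroup E] [InnerProductSpace ℝ E] [FiniteDimensional ℝ E]
    (A : Set E) (hcpt : IsCompact A) (hconv : Convex ℝ A)
    (h0 : (0 : E) ∈ interior A)
    (hC1 : ContDiffOn ℝ 1 (gauge A) {0}ᶜ)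
    (V : Submodule ℝ E) (hV : V ≠ ⊥) :
    (V.orthogonalProjection) '' A =
      {xV : V | ∃ xp ∈ Vᗮ, gauge A ((xV : E) + xp) ≤ 1 ∧
        ((xV : E) + xp ≠ 0 →
          ∀ v ∈ Vᗮ, ⟪gradient (gauge A) ((xV : E) + xp), v⟫ = 0)} :=
  projection_characterization_general A hcpt hconv h0 hC1 V
end
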